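/- Let S be an incomplete n×n matrix with k unspecified entries, K a positive integer, and M(S,K) the (2k+n)×(2k+n) matrix that agrees with S on specified entries, and for each unspecified entry e=(i,j) contains a disjoint 3×3 submatrix K·P(1) (with P(α)=[[α,1,1],[1,1,0],[1,0,1]]) on rows/columns {i, e^1, e^2} and {j, e^1, e^2}, with all other entries 0. If S admits a completion C with PSD rank(C) ≤ 3 and all entries of C bounded in absolute value by K, then PSD rank(M(S,K)) ≤ 2k + 3. -/

import Mathlib

open Matrix

noncomputable def PsdRank {α β : Type} [Fintype α] [Fintype β] (A : Matrix α β ℝ) : ℕ :=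
  sInf {k : ℕ | ∃ (B : α → Matrix (Fin k) (Fin k) ℝ) (C : β → Matrix (Fin k) (Fin k) ℝ),
    (∀ i, (B i).PosSemidef) ∧ (∀ j, (C j).PosSemidef) ∧ ∀ i j, A i j = ((B i) * (C j)).trace}

/-- The set of unspecified entries of an incomplete matrix
(entries in `Option ℝ`, with `none` denoting `⊛`). -/
def Unspec {n : ℕ} (S : Matrix (Fin n) (Fin n) (Option ℝ)) : Type :=
  {p : Fin n × Fin n // (S p.1 p.2).isNone}

instance {n : ℕ} (S : Matrix (Fin n) (Fin n) (Option ℝ)) : Fintype (Unspec S) :=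
  Subtype.fintype _

instance {n : ℕ} (S : Matrix (Fin n) (Fin n) (Option ℝ)) : DecidableEq (Unspec S) :=
  Subtype.instDecidableEq

/-- The matrix `𝓜(S,K)`: it agrees with `S` on specified entries, and for each
unspecified entry `e = (i,j)` it carries the gadget `K·P(1)`,
`P(α) = [[α,1,1],[1,1,0],[1,0,1]]`, on rows `{i,e¹,e²}` and columns `{j,e¹,e²}`;
all remaining entries are `0`. -/
def GadgetM {n : ℕ} (S : Matrix (Fin n) (Fin n) (Option ℝ)) (K : ℝ) :
    Matrix (Fin n ⊕ (Unspec S ⊕ Unspec S)) (Fin n ⊕ (Unspec S ⊕ Unspec S)) ℝ :=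
  Matrix.of fun r c => match r, c with
    | .inl i, .inl j => (S i j).getD K
    | .inl i, .inr (.inl e) => if e.val.1 = i then K else 0
    | .inl i, .inr (.inr e) => if e.val.1 = i then K else 0
    | .inr (.inl e), .inl j => if e.val.2 = j then K else 0
    | .inr (.inr e), .inl j => if e.val.2 = j then K else 0
    | .inr (.inl e), .inr (.inl e') => if e = e' then K else 0
    | .inr (.inl _), .inr (.inr _) => 0
    | .inr (.inr _), .inr (.inl _) => 0
    | .inr (.inr e), .inr (.inr e') => if e = e' then K else 0

def IsCompletion {n : ℕ} (S : Matrix (Fin n) (Fin n) (Option ℝ))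
    (C : Matrix (Fin n) (Fin n) ℝ) : Prop :=
  ∀ i j a, S i j = some a → C i j = a

/-!
Write `𝓜(S,K)` as `C` padded with zeros plus, for every unspecified entry `e = (i,j)`, a copy of
`K • P(1 - C i j / K)` on rows `{i, e¹, e²}` and columns `{j, e¹, e²}`; at `(i,j)` the two pieces add
up to `C i j + (K - C i j) = K`. PSD rank is subadditive on nonnegative matrices and does not grow
under zero padding, so the bound follows from `PsdRank C ≤ 3` and the fact that `P(α)` has a
PSD factorization of size `2` whenever `0 ≤ α ≤ 4`.
-/

def HasPsdFactorization {α β : Type} (A : Matrix α β ℝ) (γ : Type) [Fintype γ] : Prop :=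
  ∃ (B : α → Matrix γ γ ℝ) (C : β → Matrix γ γ ℝ),
    (∀ i, (B i).PosSemidef) ∧ (∀ j, (C j).PosSemidef) ∧ ∀ i j, A i j = (B i * C j).trace

def Matrix.extendByZero {α β α' β' : Type} (A : Matrix α β ℝ) (f : α' → Option α)
    (g : β' → Option β) : Matrix α' β' ℝ :=
  of fun r c => (f r).elim 0 fun i => (g c).elim 0 fun j => A i j

theorem Matrix.extendByZero_nonneg {α β α' β' : Type} {A : Matrix α β ℝ}
    (hA : ∀ i j, 0 ≤ A i j) (f : α' → Option α) (g : β' → Option β) (r : α') (c : β') :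
    0 ≤ A.extendByZero f g r c := by
  cases hr : f r <;> cases hc : g c <;> simp [extendByZero, hr, hc, hA]

theorem Matrix.PosSemidef.fromBlocks_zero {l m : Type} [Fintype l] [Fintype m]
    {A : Matrix l l ℝ} {D : Matrix m m ℝ} (hA : A.PosSemidef) (hD : D.PosSemidef) :
    (fromBlocks A 0 0 D).PosSemidef := by
  refine posSemidef_iff_dotProduct_mulVec.mpr ⟨hA.1.fromBlocks (by simp) hD.1, fun x => ?_⟩
  rw [← Sum.elim_comp_inl_inr x, fromBlocks_mulVec]
  simp only [zero_mulVec, add_zero, zero_add, star_trivial, sumElim_dotProduct_sumElim]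
  exact add_nonneg (by simpa using hA.dotProduct_mulVec_nonneg (x ∘ Sum.inl))
    (by simpa using hD.dotProduct_mulVec_nonneg (x ∘ Sum.inr))

namespace HasPsdFactorization

variable {α β γ δ : Type} [Fintype γ] [Fintype δ] {A A' : Matrix α β ℝ}

theorem reindex (h : HasPsdFactorization A γ) (e : γ ≃ δ) : HasPsdFactorization A δ := by
  obtain ⟨B, C, hB, hC, hA⟩ := h
  refine ⟨fun i => (B i).submatrix e.symm e.symm, fun j => (C j).submatrix e.symm e.symm,
    fun i => (hB i).submatrix _, fun j => (hC j).submatrix _, fun i j => ?_⟩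
  rw [hA, submatrix_mul_equiv]
  exact (e.symm.sum_comp fun k => (B i * C j) k k).symm

theorem psdRank_le [Fintype α] [Fintype β] (h : HasPsdFactorization A γ) :
    PsdRank A ≤ Fintype.card γ :=
  Nat.sInf_le (h.reindex (Fintype.equivFin γ))

theorem add (h : HasPsdFactorization A γ) (h' : HasPsdFactorization A' δ) :
    HasPsdFactorization (A + A') (γ ⊕ δ) := by
  obtain ⟨B, C, hB, hC, hA⟩ := h
  obtain ⟨B', C', hB', hC', hA'⟩ := h'
  refine ⟨fun i => fromBlocks (B i) 0 0 (B' i), fun j => fromBlocks (C j) 0 0 (C' j),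
    fun i => (hB i).fromBlocks_zero (hB' i), fun j => (hC j).fromBlocks_zero (hC' j),
    fun i j => ?_⟩
  simp [fromBlocks_multiply, trace, Fintype.sum_sum_type, hA, hA']

theorem smul (h : HasPsdFactorization A γ) {c : ℝ} (hc : 0 ≤ c) :
    HasPsdFactorization (c • A) γ := by
  obtain ⟨B, C, hB, hC, hA⟩ := h
  exact ⟨B, fun j => c • C j, hB, fun j => (hC j).smul hc, fun i j => by simp [hA]⟩

theorem extendByZero {α' β' : Type} (h : HasPsdFactorization A γ) (f : α' → Option α)
    (g : β' → Option β) : HasPsdFactorization (A.extendByZero f g) γ := by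
  obtain ⟨B, C, hB, hC, hA⟩ := h
  refine ⟨fun r => (f r).elim 0 B, fun c => (g c).elim 0 C, fun r => ?_, fun c => ?_,
    fun r c => ?_⟩
  · cases hr : f r <;> simp [hr, hB, PosSemidef.zero]
  · cases hc : g c <;> simp [hc, hC, PosSemidef.zero]
  · cases hr : f r <;> cases hc : g c <;> simp [Matrix.extendByZero, hr, hc, hA]

end HasPsdFactorization

theorem hasPsdFactorization_of_nonneg {α β : Type} [Fintype β] [DecidableEq β]
    {A : Matrix α β ℝ} (hA : ∀ i j, 0 ≤ A i j) : HasPsdFactorization A β :=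
  ⟨fun i => diagonal (A i), fun j => diagonal (Pi.single j 1),
    fun i => posSemidef_diagonal_iff.mpr (hA i), fun j => .diagonal (Pi.single_nonneg.2 zero_le_one),
    fun i j => by simp [diagonal_mul_diagonal, trace_diagonal, Pi.single_apply]⟩

/-- Nonnegativity makes the set defining `PsdRank A` nonempty; otherwise `PsdRank A` would be the
junk value `sInf ∅ = 0`. -/
theorem hasPsdFactorization_psdRank {α β : Type} [Fintype α] [Fintype β]
    {A : Matrix α β ℝ} (hA : ∀ i j, 0 ≤ A i j) : HasPsdFactorization A (Fin (PsdRank A)) := by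
  classical
  exact Nat.sInf_mem (s := {k | HasPsdFactorization A (Fin k)})
    ⟨_, (hasPsdFactorization_of_nonneg hA).reindex (Fintype.equivFin β)⟩

section PsdRank

variable {α β : Type} [Fintype α] [Fintype β]

theorem psdRank_add_le {A A' : Matrix α β ℝ} (hA : ∀ i j, 0 ≤ A i j) (hA' : ∀ i j, 0 ≤ A' i j) :
    PsdRank (A + A') ≤ PsdRank A + PsdRank A' := by
  simpa using ((hasPsdFactorization_psdRank hA).add (hasPsdFactorization_psdRank hA')).psdRank_le

theorem psdRank_sum_le {ι : Type} (s : Finset ι) {A : ι → Matrix α β ℝ}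
    (hA : ∀ e i j, 0 ≤ A e i j) : PsdRank (∑ e ∈ s, A e) ≤ ∑ e ∈ s, PsdRank (A e) := by
  classical
  induction s using Finset.induction_on with
  | empty =>
    simpa using (show HasPsdFactorization (0 : Matrix α β ℝ) (Fin 0) from
      ⟨0, 0, fun _ => .zero, fun _ => .zero, fun _ _ => by simp⟩).psdRank_le
  | insert e s he ih =>
    rw [Finset.sum_insert he, Finset.sum_insert he]
    refine (psdRank_add_le (hA e) fun i j => ?_).trans (by gcongr)
    simpa [Matrix.sum_apply] using Finset.sum_nonneg fun x _ => hA x i j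

theorem psdRank_extendByZero_le {α' β' : Type} [Fintype α'] [Fintype β'] {A : Matrix α β ℝ}
    (hA : ∀ i j, 0 ≤ A i j) (f : α' → Option α) (g : β' → Option β) :
    PsdRank (A.extendByZero f g) ≤ PsdRank A := by
  simpa using ((hasPsdFactorization_psdRank hA).extendByZero f g).psdRank_le

end PsdRank

def gadgetBlock (α : ℝ) : Matrix (Fin 3) (Fin 3) ℝ :=
  !![α, 1, 1; 1, 1, 0; 1, 0, 1]

theorem gadgetBlock_nonneg {α : ℝ} (hα : 0 ≤ α) (a b : Fin 3) : 0 ≤ gadgetBlock α a b := by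
  fin_cases a <;> fin_cases b <;> simp [gadgetBlock, hα]

theorem hasPsdFactorization_gadgetBlock {α : ℝ} (h0 : 0 ≤ α) (h4 : α ≤ 4) :
    HasPsdFactorization (gadgetBlock α) (Fin 2) := by
  obtain ⟨c, hc, rfl⟩ : ∃ c : ℝ, c ^ 2 ≤ 1 ∧ α = 2 + 2 * c :=
    ⟨α / 2 - 1, by nlinarith, by ring⟩
  obtain ⟨s, hs⟩ : ∃ s : ℝ, s ^ 2 = 1 - c ^ 2 := ⟨√(1 - c ^ 2), Real.sq_sqrt (by linarith)⟩
  refine ⟨![vecMulVec ![1, 1] ![1, 1], vecMulVec ![1, 0] ![1, 0], vecMulVec ![0, 1] ![0, 1]],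
    ![vecMulVec ![1, c] ![1, c] + vecMulVec ![0, s] ![0, s], vecMulVec ![1, 0] ![1, 0],
      vecMulVec ![0, 1] ![0, 1]], fun i => ?_, fun j => ?_, fun i j => ?_⟩
  · fin_cases i <;> exact posSemidef_vecMulVec_self_star _
  · fin_cases j
    · exact (posSemidef_vecMulVec_self_star _).add (posSemidef_vecMulVec_self_star _)
    all_goals exact posSemidef_vecMulVec_self_star _
  · fin_cases i <;> fin_cases j <;>
      simp [gadgetBlock, trace_fin_two, vecMulVec, mul_apply, Fin.sum_univ_two] <;>
      linear_combination -hs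

theorem psdRank_smul_gadgetBlock_extendByZero_le {α' β' : Type} [Fintype α'] [Fintype β']
    {K α : ℝ} (hK : 0 ≤ K) (h0 : 0 ≤ α) (h4 : α ≤ 4) (f : α' → Option (Fin 3))
    (g : β' → Option (Fin 3)) : PsdRank ((K • gadgetBlock α).extendByZero f g) ≤ 2 := by
  simpa using (((hasPsdFactorization_gadgetBlock h0 h4).smul hK).extendByZero f g).psdRank_le

theorem Option.elim_ite_some_none {α β : Type} (p : Prop) [Decidable p] (a : α) (b : β)
    (f : α → β) : (if p then some a else none).elim b f = if p then f a else b := by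
  split <;> rfl

/-- Rows (or columns) `k`, `e¹`, `e²` of `𝓜(S,K)` carry the indices `0`, `1`, `2` of the gadget
of the unspecified entry `e`. -/
def gadgetSlot {κ ι : Type} [DecidableEq κ] [DecidableEq ι] (k : κ) (e : ι) :
    κ ⊕ (ι ⊕ ι) → Option (Fin 3)
  | .inl i => if i = k then some 0 else none
  | .inr (.inl e') => if e' = e then some 1 else none
  | .inr (.inr e') => if e' = e then some 2 else none

theorem gadgetM_eq_add_sum {n : ℕ} (S : Matrix (Fin n) (Fin n) (Option ℝ)) {K : ℝ} (hK : K ≠ 0)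
    {C : Matrix (Fin n) (Fin n) ℝ} (hC : IsCompletion S C) :
    GadgetM S K = C.extendByZero Sum.getLeft? Sum.getLeft? +
      ∑ e : Unspec S, (K • gadgetBlock (1 - C e.1.1 e.1.2 / K)).extendByZero
        (gadgetSlot e.1.1 e) (gadgetSlot e.1.2 e) := by
  ext (i | e | e) (j | e' | e') <;>
    simp only [GadgetM, of_apply, extendByZero, gadgetSlot, Fin.isValue, gadgetBlock, smul_of,
      smul_cons, smul_eq_mul, mul_one, smul_empty, mul_zero, Matrix.add_apply, Sum.getLeft?_inl,
      Sum.getLeft?_inr, Option.elim_some, Option.elim_none, Matrix.sum_apply,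
      Option.elim_ite_some_none, cons_val', cons_val_zero, cons_val_one, cons_val, cons_val_fin_one,
      ← ite_and, zero_add, ite_self, Finset.sum_const_zero, add_zero]
  case inl.inl =>
    cases hS : S i j with
    | none =>
      have hsum : (∑ c : Unspec S, if i = c.1.1 ∧ j = c.1.2 then K * (1 - C c.1.1 c.1.2 / K) else 0)
          = K * (1 - C i j / K) := by
        rw [Fintype.sum_eq_single ⟨(i, j), by simp [hS]⟩]
        · simp
        · intro c hc
          exact if_neg fun h => hc (Subtype.ext (Prod.ext h.1.symm h.2.symm))
      rw [hsum]
      simp [mul_sub, mul_div_cancel₀ _ hK]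
    | some a =>
      have hsum : (∑ c : Unspec S, if i = c.1.1 ∧ j = c.1.2 then K * (1 - C c.1.1 c.1.2 / K) else 0)
          = 0 :=
        Fintype.sum_eq_zero _ fun c => if_neg fun h => by simpa [← h.1, ← h.2, hS] using c.2
      rw [hsum]
      simp [hC i j a hS]
  all_goals rw [Fintype.sum_eq_single ‹Unspec S›] <;> grind

theorem psdRank_gadget_of_completion {n : ℕ}
    (S : Matrix (Fin n) (Fin n) (Option ℝ)) (K : ℕ) (hK : 0 < K)
    (C : Matrix (Fin n) (Fin n) ℝ) (hC : IsCompletion S C)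
    (hCnonneg : ∀ i j, 0 ≤ C i j) (hCpsd : PsdRank C ≤ 3)
    (hCbd : ∀ i j, |C i j| ≤ (K : ℝ)) :
    PsdRank (GadgetM S (K : ℝ)) ≤ 2 * Fintype.card (Unspec S) + 3 := by
  have hKpos : (0 : ℝ) < K := by exact_mod_cast hK
  set G : Unspec S → Matrix _ _ ℝ := fun e =>
    ((K : ℝ) • gadgetBlock (1 - C e.1.1 e.1.2 / K)).extendByZero
      (gadgetSlot e.1.1 e) (gadgetSlot e.1.2 e)
  have hα0 : ∀ e : Unspec S, 0 ≤ 1 - C e.1.1 e.1.2 / K := fun e =>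
    sub_nonneg.2 ((div_le_one hKpos).2 (abs_le.mp (hCbd _ _)).2)
  have hα4 : ∀ e : Unspec S, 1 - C e.1.1 e.1.2 / K ≤ 4 := fun e => by
    linarith [div_nonneg (hCnonneg e.1.1 e.1.2) hKpos.le]
  have hG : ∀ e r c, 0 ≤ G e r c := fun e =>
    extendByZero_nonneg (fun a b => mul_nonneg hKpos.le (gadgetBlock_nonneg (hα0 e) a b)) _ _
  rw [gadgetM_eq_add_sum S hKpos.ne' hC]
  calc PsdRank (C.extendByZero Sum.getLeft? Sum.getLeft? + ∑ e, G e)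
      ≤ PsdRank (C.extendByZero Sum.getLeft? Sum.getLeft?) + ∑ e, PsdRank (G e) :=
        (psdRank_add_le (extendByZero_nonneg hCnonneg _ _) fun r c => by
          simpa [Matrix.sum_apply] using Finset.sum_nonneg fun e _ => hG e r c).trans
          (add_le_add_right (psdRank_sum_le _ hG) _)
    _ ≤ 3 + ∑ _e : Unspec S, 2 :=
        add_le_add ((psdRank_extendByZero_le hCnonneg _ _).trans hCpsd)
          (Finset.sum_le_sum fun e _ =>
            psdRank_smul_gadgetBlock_extendByZero_le hKpos.le (hα0 e) (hα4 e) _ _)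
    _ = 2 * Fintype.card (Unspec S) + 3 := by simp [add_comm, mul_comm]
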